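/- For every k ≥ 3, the Hanoi group H_c^{(k)} is contracting; its prenucleus, and hence its nucleus, equals S_{k,1} ∪ {1}. -/

import Mathlib

/-!
Common framework: automorphisms of the rooted tree `X_k^*`, root permutations,
sections, self-similar and contracting groups, Hanoi automorphisms and Hanoi
groups, following Makisumi–Stadnyk–Steinhurst, "Modified Hanoi Towers Groups
and Limit Spaces".

A word `x_n … x_1` over the alphabet `X_k = Fin k` is encoded as the list
`[x_n, …, x_1]`, whose head `x_n` is the first letter, i.e. the letter that a
tree automorphism reads (and permutes) first.
-/

namespace Hanoi

/-- Words over the alphabet `X_k = Fin k`. -/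
abbrev Word (k : ℕ) := List (Fin k)

/-- `e` is an automorphism of the rooted tree `X_k^*`: it fixes the root
(the empty word), preserves word length (levels) and preserves the tree
structure (words sharing an initial segment of length `n` are sent to words
sharing an initial segment of length `n`). -/
def IsTreeAut {k : ℕ} (e : Equiv.Perm (Word k)) : Prop :=
  (∀ w : Word k, (e w).length = w.length) ∧
    ∀ (w v : Word k) (n : ℕ), w.take n = v.take n → (e w).take n = (e v).take n

open Classical in
/-- The root permutation `σ_e` of a tree automorphism `e` (its action on
one-letter words). -/
noncomputable def rootPerm {k : ℕ} (e : Equiv.Perm (Word k)) : Equiv.Perm (Fin k) :=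
  if h : Function.Bijective (fun x : Fin k => ((e [x]).head?.getD x)) then
    Equiv.ofBijective _ h
  else 1

open Classical in
/-- The section `e|_x` of `e` at a letter `x`: the unique automorphism with
`e (x :: w) = σ_e x :: (e|_x) w` for all words `w`. -/
noncomputable def sec {k : ℕ} (e : Equiv.Perm (Word k)) (x : Fin k) : Equiv.Perm (Word k) :=
  if h : Function.Bijective (fun w : Word k => (e (x :: w)).tail) then
    Equiv.ofBijective _ h
  else 1

/-- The section `e|_v` of `e` at a word `v = x_n … x_1`, defined by
`e|_v = (e|_{x_n})|_{x_{n-1} … x_1}`. -/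
noncomputable def secW {k : ℕ} (e : Equiv.Perm (Word k)) : Word k → Equiv.Perm (Word k)
  | [] => e
  | x :: v => secW (sec e x) v

/-- A subgroup of the permutations of `X_k^*` is self-similar if it consists of
tree automorphisms and is closed under taking sections. -/
def IsSelfSimilar {k : ℕ} (G : Subgroup (Equiv.Perm (Word k))) : Prop :=
  (∀ g ∈ G, IsTreeAut g) ∧ ∀ g ∈ G, ∀ x : Fin k, sec g x ∈ G

/-- A self-similar group `G` is contracting if there is a finite subset `N ⊆ G`
such that for every `g ∈ G` all sections of `g` at words of length at least
some `m` lie in `N`. -/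
def IsContracting {k : ℕ} (G : Subgroup (Equiv.Perm (Word k))) : Prop :=
  ∃ N : Set (Equiv.Perm (Word k)), N.Finite ∧ N ⊆ (G : Set (Equiv.Perm (Word k))) ∧
    ∀ g ∈ G, ∃ m : ℕ, ∀ v : Word k, m ≤ v.length → secW g v ∈ N

/-- `N` is the nucleus of `G`: a smallest finite subset of `G` catching all
deep enough sections of every element of `G`. -/
def IsNucleus {k : ℕ} (G : Subgroup (Equiv.Perm (Word k)))
    (N : Set (Equiv.Perm (Word k))) : Prop :=
  (N.Finite ∧ N ⊆ (G : Set (Equiv.Perm (Word k))) ∧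
    ∀ g ∈ G, ∃ m : ℕ, ∀ v : Word k, m ≤ v.length → secW g v ∈ N) ∧
  ∀ N' : Set (Equiv.Perm (Word k)), N'.Finite → N' ⊆ (G : Set (Equiv.Perm (Word k))) →
    (∀ g ∈ G, ∃ m : ℕ, ∀ v : Word k, m ≤ v.length → secW g v ∈ N') → N ⊆ N'

/-- `a` is a Hanoi automorphism with set of inactive pegs `Q`: the section at
each active peg (element of the complement of `Q`) is trivial, the section at
each inactive peg is `a` itself, and the root permutation fixes each inactive
peg. -/
def IsHanoiWith {k : ℕ} (a : Equiv.Perm (Word k)) (Q : Set (Fin k)) : Prop :=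
  IsTreeAut a ∧ (∀ i ∉ Q, sec a i = 1) ∧ (∀ j ∈ Q, sec a j = a) ∧
    ∀ j ∈ Q, rootPerm a j = j

/-- `a` is a `k`-peg Hanoi automorphism. -/
def IsHanoiAut {k : ℕ} (a : Equiv.Perm (Word k)) : Prop := ∃ Q, IsHanoiWith a Q

open Classical in
/-- The set `Q_a` of inactive pegs of a Hanoi automorphism `a`; by convention
`Q_1 = X_k` (for `a ≠ 1` the set of inactive pegs is uniquely determined). -/
noncomputable def inactivePegs {k : ℕ} (a : Equiv.Perm (Word k)) : Set (Fin k) :=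
  if a = 1 then Set.univ
  else if h : ∃ Q, IsHanoiWith a Q then h.choose else ∅

/-- `S_{k,q}`: the set of Hanoi automorphisms over `X_k` with exactly `q`
inactive pegs. -/
noncomputable def hanoiSet (k q : ℕ) : Set (Equiv.Perm (Word k)) :=
  {a | IsHanoiAut a ∧ (inactivePegs a).ncard = q}

/-- `L = [s_n, …, s_1]` is a representation of `g` over the generating set `S`:
each `s_i ∈ S ∪ S⁻¹` and `g = s_n ⋯ s_2 s_1`. -/
def IsRepOf {k : ℕ} (S : Set (Equiv.Perm (Word k))) (L : List (Equiv.Perm (Word k)))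
    (g : Equiv.Perm (Word k)) : Prop :=
  (∀ s ∈ L, s ∈ S ∨ s⁻¹ ∈ S) ∧ L.prod = g

/-- The length `l(g)` of `g` with respect to `S`: the length of a minimal
representation (`0` for the identity). -/
noncomputable def repLength {k : ℕ} (S : Set (Equiv.Perm (Word k)))
    (g : Equiv.Perm (Word k)) : ℕ :=
  sInf {n | ∃ L, IsRepOf S L g ∧ L.length = n}

/-- The essential set of a representation: the intersection of the sets of
inactive pegs of its letters. -/
noncomputable def essSet {k : ℕ} (L : List (Equiv.Perm (Word k))) : Set (Fin k) :=
  ⋂ s ∈ L, inactivePegs s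

/-- The prenucleus of `G`: the set of elements `g ∈ G` with `g|_j = g` for some
letter `j`. -/
noncomputable def preNucleus {k : ℕ} (G : Subgroup (Equiv.Perm (Word k))) :
    Set (Equiv.Perm (Word k)) :=
  {g | g ∈ G ∧ ∃ j : Fin k, sec g j = g}

/-- The underlying function of the Hanoi Towers move `a_{ij}`: it changes the
first occurrence of `i` or `j` in a word by means of the transposition `(i j)`
and leaves the rest of the word unchanged. -/
def hanoiMoveFun {k : ℕ} (i j : Fin k) : Word k → Word k
  | [] => []
  | x :: w => if x = i ∨ x = j then Equiv.swap i j x :: w else x :: hanoiMoveFun i j w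

theorem hanoiMoveFun_involutive {k : ℕ} (i j : Fin k) :
    Function.Involutive (hanoiMoveFun i j) := by
  intro w
  induction w with
  | nil => rfl
  | cons x t ih =>
    by_cases h : x = i ∨ x = j
    · have h2 : Equiv.swap i j x = i ∨ Equiv.swap i j x = j := by
        rcases h with h | h <;> subst h <;> simp
      simp only [hanoiMoveFun, if_pos h, if_pos h2, Equiv.swap_apply_self]
    · simp only [hanoiMoveFun, if_neg h, ih]

/-- The Hanoi Towers move `a_{ij}`, as a permutation of `X_k^*`: its root
permutation is the transposition `(i j)`, its sections at `i` and `j` are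
trivial and all its other sections equal `a_{ij}` itself. -/
def hanoiMove {k : ℕ} (i j : Fin k) : Equiv.Perm (Word k) :=
  (hanoiMoveFun_involutive i j).toPerm

/-- The orbit of the letter `j` under the subgroup of `Sym(X_k)` generated by
the root permutations of the elements of `T`. -/
noncomputable def orbT {k : ℕ} (T : Finset (Equiv.Perm (Word k))) (j : Fin k) : Set (Fin k) :=
  MulAction.orbit (Subgroup.closure ((fun a => rootPerm a) '' (T : Set (Equiv.Perm (Word k))))) j

/-- The set `Fix(T)` of letters fixed by the root permutation of every element
of `T`. -/
noncomputable def fixT {k : ℕ} (T : Finset (Equiv.Perm (Word k))) : Set (Fin k) :=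
  {x | ∀ s ∈ T, rootPerm s x = x}

/-- Condition (*) on a generating set `S` of Hanoi automorphisms: for every
finite `T ⊆ S` with nonempty essential set and every letter `j ∉ Fix(T)`,
the orbit of `j` misses the inactive pegs of some element of `T`. -/
noncomputable def CondStar {k : ℕ} (S : Set (Equiv.Perm (Word k))) : Prop :=
  ∀ T : Finset (Equiv.Perm (Word k)), (T : Set (Equiv.Perm (Word k))) ⊆ S →
    (⋂ s ∈ T, inactivePegs s).Nonempty →
    ∀ j : Fin k, j ∉ fixT T →
      ∃ s ∈ T, orbT T j ∩ inactivePegs s = ∅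

open Classical in
/-- `d(g)`: the least number of distinct generators occurring among all
representations of `g` having nonempty essential set. -/
noncomputable def dCount {k : ℕ} (S : Set (Equiv.Perm (Word k)))
    (g : Equiv.Perm (Word k)) : ℕ :=
  sInf {M | ∃ L, IsRepOf S L g ∧ (essSet L).Nonempty ∧ L.toFinset.card = M}

/-- `S` is fully symmetric: for every non-identity `a ∈ S` and every
`φ ∈ Sym(X_k)`, the Hanoi automorphism `φ·a` with inactive pegs `φ(Q_a)` and
root permutation `φ ∘ σ_a ∘ φ⁻¹` again lies in `S`. -/
noncomputable def FullySymmetric {k : ℕ} (S : Set (Equiv.Perm (Word k))) : Prop :=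
  ∀ a ∈ S, a ≠ 1 → ∀ φ : Equiv.Perm (Fin k), ∀ b : Equiv.Perm (Word k),
    IsHanoiWith b (φ '' inactivePegs a) →
    rootPerm b = φ * rootPerm a * φ⁻¹ → b ∈ S

/-- The family `R̲_{k,n}`: the identity together with all Hanoi automorphisms
`a` such that (1) `Q_a ⊆ {m+1, …, m+n}` for some `m`, and (2) whenever
`i ∈ Q_a` the root permutation of `a` fixes `i-1, …, i-(n-1)`
(all peg labels mod `k`). -/
noncomputable def Runder (k n : ℕ) : Set (Equiv.Perm (Word k)) :=
  {a | a = 1 ∨ (IsHanoiAut a ∧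
    (∃ m : Fin k, ∀ q ∈ inactivePegs a, ∃ t : ℕ, 1 ≤ t ∧ t ≤ n ∧
      (q : ℕ) = ((m : ℕ) + t) % k) ∧
    ∀ i ∈ inactivePegs a, ∀ x : Fin k, ∀ t : ℕ, 1 ≤ t → t ≤ n - 1 →
      ((x : ℕ) + t) % k = (i : ℕ) → rootPerm a x = x)}

/-- The family `R̄_{k,n}`: the identity together with all Hanoi automorphisms
`a` such that (1) `Q_a ⊆ {m+1, …, m+n}` for some `m`, and (2) whenever
`i ∈ Q_a` the root permutation of `a` fixes `i+1, …, i+(n-1)`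
(all peg labels mod `k`). -/
noncomputable def Rover (k n : ℕ) : Set (Equiv.Perm (Word k)) :=
  {a | a = 1 ∨ (IsHanoiAut a ∧
    (∃ m : Fin k, ∀ q ∈ inactivePegs a, ∃ t : ℕ, 1 ≤ t ∧ t ≤ n ∧
      (q : ℕ) = ((m : ℕ) + t) % k) ∧
    ∀ i ∈ inactivePegs a, ∀ x : Fin k, ∀ t : ℕ, 1 ≤ t → t ≤ n - 1 →
      (x : ℕ) = ((i : ℕ) + t) % k → rootPerm a x = x)}

/-- The finite word `x_m … x_1` (first letter `x_m`) read off from a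
left-infinite sequence `… x_2 x_1`, encoded as `x : ℕ → Fin k` with
`x s = x_{s+1}`. -/
def wordOf {k : ℕ} (x : ℕ → Fin k) (m : ℕ) : Word k := (List.range m).reverse.map x

/-!
Every element of `H_c^{(k)}` is a product `s_n ⋯ s_1` of Hanoi automorphisms with one inactive
peg, since that generating set is closed under inversion. The section of such a product at a
letter `x` is the product of a subword: the factor `s_i` survives exactly when the letter reaching
it is an inactive peg of `s_i`, and contributes `1` otherwise. The whole word survives only if `x`
is an inactive peg of every factor; then the product is itself a Hanoi automorphism with inactive
peg `x`, whose sections are itself or `1`. Otherwise every first-level section is a strictly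
shorter product, and induction on the length puts all deep sections into `S_{k,1} ∪ {1}`, a
finite set because a Hanoi automorphism is determined by its root permutation and its inactive
pegs. Each element of that set is its own section at an inactive peg, which forces it
into the prenucleus and into every finite set that catches all deep sections.
-/

open Equiv

section TreeAut

variable {k : ℕ} {e g h : Perm (Word k)}

lemma isTreeAut_one : IsTreeAut (1 : Perm (Word k)) :=
  ⟨fun _ => rfl, fun _ _ _ hwv => hwv⟩

lemma IsTreeAut.mul (hg : IsTreeAut g) (hh : IsTreeAut h) : IsTreeAut (g * h) :=
  ⟨fun w => (hg.1 (h w)).trans (hh.1 w), fun _ _ _ hwv => hg.2 _ _ _ (hh.2 _ _ _ hwv)⟩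

lemma IsTreeAut.take_apply (he : IsTreeAut e) (w : Word k) (n : ℕ) :
    (e w).take n = e (w.take n) := by
  rw [he.2 w (w.take n) n (by simp), List.take_of_length_le]
  simp [he.1]

lemma IsTreeAut.inv (he : IsTreeAut e) : IsTreeAut e⁻¹ := by
  refine ⟨fun w => ?_, fun w v n hwv => e.injective ?_⟩
  · rw [← he.1 (e⁻¹ w), Perm.coe_inv, apply_symm_apply]
  · rw [← he.take_apply, ← he.take_apply, Perm.coe_inv, apply_symm_apply, apply_symm_apply, hwv]

lemma IsTreeAut.exists_apply_singleton (he : IsTreeAut e) (x : Fin k) : ∃ y, e [x] = [y] :=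
  List.length_eq_one_iff.mp (he.1 [x])

lemma IsTreeAut.bijective_head_apply_singleton (he : IsTreeAut e) :
    Function.Bijective (fun x : Fin k => (e [x]).head?.getD x) := by
  refine Finite.injective_iff_bijective.mp fun a b hab => ?_
  obtain ⟨ya, hya⟩ := he.exists_apply_singleton a
  obtain ⟨yb, hyb⟩ := he.exists_apply_singleton b
  simp only [hya, hyb, List.head?_cons, Option.getD_some] at hab
  simpa using e.injective (by rw [hya, hyb, hab] : e [a] = e [b])

lemma IsTreeAut.apply_singleton (he : IsTreeAut e) (x : Fin k) : e [x] = [rootPerm e x] := by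
  obtain ⟨y, hy⟩ := he.exists_apply_singleton x
  rw [rootPerm, dif_pos he.bijective_head_apply_singleton]
  simp [hy]

lemma IsTreeAut.rootPerm_apply_eq (he : IsTreeAut e) {x y : Fin k} (hxy : e [x] = [y]) :
    rootPerm e x = y := by
  simpa [he.apply_singleton] using hxy

lemma IsTreeAut.apply_cons_eq_cons_tail (he : IsTreeAut e) (x : Fin k) (w : Word k) :
    e (x :: w) = rootPerm e x :: (e (x :: w)).tail := by
  conv_lhs => rw [← List.take_append_drop 1 (e (x :: w))]
  rw [he.take_apply, List.take_succ_cons, List.take_zero, he.apply_singleton, List.drop_one]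
  rfl

lemma IsTreeAut.bijective_tail_apply_cons (he : IsTreeAut e) (x : Fin k) :
    Function.Bijective (fun w : Word k => (e (x :: w)).tail) := by
  refine ⟨fun w v hwv => ?_, fun t => ?_⟩
  · have hcons : e (x :: w) = e (x :: v) := by
      rw [he.apply_cons_eq_cons_tail, he.apply_cons_eq_cons_tail x v]
      exact congrArg _ hwv
    simpa using e.injective hcons
  · set u := e⁻¹ (rootPerm e x :: t) with hu_def
    have hu : u.take 1 = [x] := by
      rw [he.inv.take_apply, List.take_succ_cons, List.take_zero, ← he.apply_singleton,
        Perm.coe_inv, symm_apply_apply]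
    have hxu : x :: u.tail = u := by
      simpa [hu] using List.take_append_drop 1 u
    refine ⟨u.tail, ?_⟩
    change (e (x :: u.tail)).tail = t
    rw [hxu, hu_def, Perm.coe_inv, apply_symm_apply, List.tail_cons]

lemma IsTreeAut.sec_apply (he : IsTreeAut e) (x : Fin k) (w : Word k) :
    sec e x w = (e (x :: w)).tail := by
  rw [sec, dif_pos (he.bijective_tail_apply_cons x)]
  rfl

lemma IsTreeAut.apply_cons (he : IsTreeAut e) (x : Fin k) (w : Word k) :
    e (x :: w) = rootPerm e x :: sec e x w := by
  rw [he.sec_apply]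
  exact he.apply_cons_eq_cons_tail x w

lemma sec_one (x : Fin k) : sec (1 : Perm (Word k)) x = 1 := by
  refine Equiv.ext fun w => ?_
  rw [isTreeAut_one.sec_apply]
  rfl

lemma rootPerm_one : rootPerm (1 : Perm (Word k)) = 1 :=
  Equiv.ext fun _ => isTreeAut_one.rootPerm_apply_eq rfl

lemma rootPerm_mul (hg : IsTreeAut g) (hh : IsTreeAut h) :
    rootPerm (g * h) = rootPerm g * rootPerm h :=
  Equiv.ext fun x => (hg.mul hh).rootPerm_apply_eq <| by
    rw [Perm.mul_apply, hh.apply_singleton, hg.apply_singleton, Perm.mul_apply]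

lemma sec_mul (hg : IsTreeAut g) (hh : IsTreeAut h) (x : Fin k) :
    sec (g * h) x = sec g (rootPerm h x) * sec h x := by
  refine Equiv.ext fun w => ?_
  rw [(hg.mul hh).sec_apply, Perm.mul_apply, hh.apply_cons, Perm.mul_apply, hg.sec_apply]

lemma rootPerm_inv (hg : IsTreeAut g) : rootPerm g⁻¹ = (rootPerm g)⁻¹ := by
  have h1 := rootPerm_mul hg.inv hg
  rw [inv_mul_cancel, rootPerm_one] at h1
  exact eq_inv_of_mul_eq_one_left h1.symm

lemma sec_inv (hg : IsTreeAut g) (y : Fin k) :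
    sec g⁻¹ y = (sec g ((rootPerm g)⁻¹ y))⁻¹ := by
  have h1 := sec_mul hg.inv hg ((rootPerm g)⁻¹ y)
  rw [inv_mul_cancel, sec_one, Perm.coe_inv, apply_symm_apply] at h1
  exact eq_inv_of_mul_eq_one_left h1.symm

lemma rootPerm_prod_apply_eq_self {L : List (Perm (Word k))} {x : Fin k}
    (hL : ∀ s ∈ L, IsTreeAut s ∧ rootPerm s x = x) :
    IsTreeAut L.prod ∧ rootPerm L.prod x = x :=
  List.prod_induction (fun g => IsTreeAut g ∧ rootPerm g x = x)
    (fun _ _ ha hb => ⟨ha.1.mul hb.1, by rw [rootPerm_mul ha.1 hb.1, Perm.mul_apply, hb.2, ha.2]⟩)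
    ⟨isTreeAut_one, by rw [rootPerm_one, Perm.one_apply]⟩ hL

lemma secW_one (v : Word k) : secW (1 : Perm (Word k)) v = 1 := by
  induction v with
  | nil => rfl
  | cons x v ih => rw [secW, sec_one, ih]

lemma secW_replicate_of_sec_eq_self {j : Fin k} (hj : sec g j = g) (m : ℕ) :
    secW g (List.replicate m j) = g := by
  induction m with
  | zero => rfl
  | succ m ih => rw [List.replicate_succ, secW, hj, ih]

end TreeAut

section Hanoi

variable {k : ℕ} {a b : Perm (Word k)} {Q : Set (Fin k)}

lemma isHanoiWith_one (Q : Set (Fin k)) : IsHanoiWith (1 : Perm (Word k)) Q :=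
  ⟨isTreeAut_one, fun i _ => sec_one i, fun j _ => sec_one j,
    fun j _ => by rw [rootPerm_one, Perm.one_apply]⟩

lemma IsHanoiWith.rootPerm_apply_mem_iff (ha : IsHanoiWith a Q) (i : Fin k) :
    rootPerm a i ∈ Q ↔ i ∈ Q := by
  refine ⟨fun hi => ?_, fun hi => by rwa [ha.2.2.2 i hi]⟩
  rwa [(rootPerm a).injective (ha.2.2.2 _ hi)] at hi

lemma IsHanoiWith.mul (ha : IsHanoiWith a Q) (hb : IsHanoiWith b Q) : IsHanoiWith (a * b) Q := by
  refine ⟨ha.1.mul hb.1, fun i hi => ?_, fun j hj => ?_, fun j hj => ?_⟩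
  · rw [sec_mul ha.1 hb.1, hb.2.1 i hi, ha.2.1 _ (mt (hb.rootPerm_apply_mem_iff i).mp hi),
      mul_one]
  · rw [sec_mul ha.1 hb.1, hb.2.2.2 j hj, ha.2.2.1 j hj, hb.2.2.1 j hj]
  · rw [rootPerm_mul ha.1 hb.1, Perm.mul_apply, hb.2.2.2 j hj, ha.2.2.2 j hj]

lemma IsHanoiWith.inv (ha : IsHanoiWith a Q) : IsHanoiWith a⁻¹ Q := by
  have hfix : ∀ j ∈ Q, (rootPerm a)⁻¹ j = j := fun j hj =>
    Perm.inv_eq_iff_eq.mpr (ha.2.2.2 j hj).symm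
  refine ⟨ha.1.inv, fun i hi => ?_, fun j hj => ?_, fun j hj => ?_⟩
  · have hi' : (rootPerm a)⁻¹ i ∉ Q := by
      rwa [← ha.rootPerm_apply_mem_iff, Perm.coe_inv, apply_symm_apply]
    rw [sec_inv ha.1, ha.2.1 _ hi', inv_one]
  · rw [sec_inv ha.1, hfix j hj, ha.2.2.1 j hj]
  · rw [rootPerm_inv ha.1, hfix j hj]

lemma IsHanoiWith.ext (ha : IsHanoiWith a Q) (hb : IsHanoiWith b Q)
    (hab : rootPerm a = rootPerm b) : a = b := by
  ext w : 1
  induction w with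
  | nil => rw [List.length_eq_zero_iff.mp (ha.1.1 []), List.length_eq_zero_iff.mp (hb.1.1 [])]
  | cons x w ih =>
    rw [ha.1.apply_cons, hb.1.apply_cons, hab]
    by_cases hx : x ∈ Q
    · rw [ha.2.2.1 x hx, hb.2.2.1 x hx, ih]
    · rw [ha.2.1 x hx, hb.2.1 x hx]

lemma IsHanoiWith.secW_eq_self_or_one (ha : IsHanoiWith a Q) (v : Word k) :
    secW a v = a ∨ secW a v = 1 := by
  induction v with
  | nil => exact .inl rfl
  | cons x v ih =>
    by_cases hx : x ∈ Q
    · rwa [secW, ha.2.2.1 x hx]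
    · rw [secW, ha.2.1 x hx, secW_one]
      exact .inr rfl

lemma IsHanoiWith.inactivePegs_eq (ha : IsHanoiWith a Q) (ha1 : a ≠ 1) : inactivePegs a = Q := by
  have hQ : ∃ Q, IsHanoiWith a Q := ⟨Q, ha⟩
  rw [inactivePegs, if_neg ha1, dif_pos hQ]
  ext x
  refine ⟨fun hx => by_contra fun hxQ => ha1 ?_, fun hx => by_contra fun hxQ => ha1 ?_⟩
  · rw [← hQ.choose_spec.2.2.1 x hx, ha.2.1 x hxQ]
  · rw [← ha.2.2.1 x hx, hQ.choose_spec.2.1 x hxQ]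

lemma IsHanoiAut.isHanoiWith_inactivePegs (ha : IsHanoiAut a) :
    IsHanoiWith a (inactivePegs a) := by
  by_cases ha1 : a = 1
  · exact ha1 ▸ isHanoiWith_one _
  · obtain ⟨Q, hQ⟩ := ha
    rwa [hQ.inactivePegs_eq ha1]

lemma finite_setOf_isHanoiAut : {a : Perm (Word k) | IsHanoiAut a}.Finite := by
  refine Set.Finite.of_finite_image (f := fun a => (rootPerm a, inactivePegs a))
    (Set.toFinite _) fun a ha b hb hab => ?_
  obtain ⟨hroot, hpegs⟩ := Prod.mk.inj hab
  exact ha.isHanoiWith_inactivePegs.ext (hpegs ▸ hb.isHanoiWith_inactivePegs) hroot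

end Hanoi

section Nucleus

variable {k : ℕ} {a s : Perm (Word k)}

lemma inactivePegs_nonempty_of_mem_hanoiSet_one (ha : a ∈ hanoiSet k 1) :
    (inactivePegs a).Nonempty :=
  Set.nonempty_of_ncard_ne_zero (by rw [ha.2]; exact one_ne_zero)

lemma isHanoiAut_of_mem (ha : a ∈ hanoiSet k 1 ∪ {1}) : IsHanoiAut a := by
  rcases ha with ha | rfl
  · exact ha.1
  · exact ⟨∅, isHanoiWith_one ∅⟩

lemma isHanoiWith_singleton_of_mem_inactivePegs (hs : s ∈ hanoiSet k 1 ∪ {1}) {j : Fin k}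
    (hj : j ∈ inactivePegs s) : IsHanoiWith s {j} := by
  rcases hs with hs | rfl
  · obtain ⟨x, hx⟩ := Set.ncard_eq_one.mp hs.2
    have hjx : j = x := by rwa [hx, Set.mem_singleton_iff] at hj
    have hpegs : inactivePegs s = {j} := hjx ▸ hx
    exact hpegs ▸ hs.1.isHanoiWith_inactivePegs
  · exact isHanoiWith_one _

lemma mem_of_isHanoiWith_singleton {j : Fin k} (ha : IsHanoiWith a {j}) :
    a ∈ hanoiSet k 1 ∪ {1} := by
  by_cases ha1 : a = 1
  · exact .inr ha1
  · exact .inl ⟨⟨_, ha⟩, by rw [ha.inactivePegs_eq ha1, Set.ncard_singleton]⟩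

lemma inv_mem_of_mem (ha : a ∈ hanoiSet k 1 ∪ {1}) : a⁻¹ ∈ hanoiSet k 1 ∪ {1} := by
  rcases ha with ha | rfl
  · obtain ⟨j, hj⟩ := inactivePegs_nonempty_of_mem_hanoiSet_one ha
    exact mem_of_isHanoiWith_singleton (isHanoiWith_singleton_of_mem_inactivePegs (.inl ha) hj).inv
  · exact .inr inv_one

lemma exists_sec_eq_self_of_mem (hk : 0 < k) (ha : a ∈ hanoiSet k 1 ∪ {1}) :
    ∃ j, sec a j = a := by
  rcases ha with ha | rfl
  · obtain ⟨j, hj⟩ := inactivePegs_nonempty_of_mem_hanoiSet_one ha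
    exact ⟨j, ha.1.isHanoiWith_inactivePegs.2.2.1 j hj⟩
  · exact ⟨⟨0, hk⟩, sec_one _⟩

end Nucleus

section Contraction

variable {k : ℕ}

lemma exists_sublist_sec_prod_eq {L : List (Perm (Word k))} (hL : ∀ s ∈ L, IsHanoiAut s)
    (x : Fin k) : ∃ M : List (Perm (Word k)), M.Sublist L ∧ sec L.prod x = M.prod ∧
      (M.length < L.length ∨ ∀ s ∈ L, x ∈ inactivePegs s) := by
  induction L with
  | nil => exact ⟨[], .slnil, by rw [List.prod_nil, sec_one], .inr (by simp)⟩
  | cons s T ih =>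
    obtain ⟨hs, hT⟩ := List.forall_mem_cons.mp hL
    obtain ⟨M, hMT, hsec, hlen⟩ := ih hT
    have hsH := hs.isHanoiWith_inactivePegs
    have hTtree : IsTreeAut T.prod := List.prod_induction _ (fun _ _ => IsTreeAut.mul)
      isTreeAut_one fun t ht => (hT t ht).isHanoiWith_inactivePegs.1
    have hsec_cons : sec (s :: T).prod x = sec s (rootPerm T.prod x) * M.prod := by
      rw [List.prod_cons, sec_mul hsH.1 hTtree, hsec]
    by_cases hy : rootPerm T.prod x ∈ inactivePegs s
    · refine ⟨s :: M, hMT.cons_cons s, by rw [hsec_cons, hsH.2.2.1 _ hy, List.prod_cons], ?_⟩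
      rcases hlen with hlen | hall
      · exact .inl (by simpa using hlen)
      · have hfix : rootPerm T.prod x = x := (rootPerm_prod_apply_eq_self fun t ht =>
          ⟨(hT t ht).isHanoiWith_inactivePegs.1,
            (hT t ht).isHanoiWith_inactivePegs.2.2.2 x (hall t ht)⟩).2
        exact .inr (List.forall_mem_cons.mpr ⟨hfix ▸ hy, hall⟩)
    · refine ⟨M, hMT.cons s, by rw [hsec_cons, hsH.2.1 _ hy, one_mul], .inl ?_⟩
      simpa using Nat.lt_succ_of_le hMT.length_le

def SecWEventuallyMem (N : Set (Perm (Word k))) (g : Perm (Word k)) : Prop :=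
  ∃ m : ℕ, ∀ v : Word k, m ≤ v.length → secW g v ∈ N

lemma SecWEventuallyMem.mem_of_sec_eq_self {N : Set (Perm (Word k))} {g : Perm (Word k)}
    (hg : SecWEventuallyMem N g) {j : Fin k} (hj : sec g j = g) : g ∈ N := by
  obtain ⟨m, hm⟩ := hg
  simpa [secW_replicate_of_sec_eq_self hj] using hm (List.replicate m j) (by simp)

lemma secWEventuallyMem_of_forall_sec {N : Set (Perm (Word k))} {g : Perm (Word k)}
    (h : ∀ x, SecWEventuallyMem N (sec g x)) : SecWEventuallyMem N g := by
  choose m hm using h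
  refine ⟨Finset.univ.sup m + 1, fun v hv => ?_⟩
  cases v with
  | nil => simp at hv
  | cons x v =>
    have hmx : m x ≤ Finset.univ.sup m := Finset.le_sup (Finset.mem_univ x)
    exact hm x v (by simp only [List.length_cons] at hv; omega)

theorem secWEventuallyMem_prod (L : List (Perm (Word k)))
    (hL : ∀ s ∈ L, s ∈ hanoiSet k 1 ∪ {1}) :
    SecWEventuallyMem (hanoiSet k 1 ∪ {1}) L.prod := by
  by_cases hcommon : ∃ j, ∀ s ∈ L, j ∈ inactivePegs s
  · obtain ⟨j, hj⟩ := hcommon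
    have hprod : IsHanoiWith L.prod {j} :=
      List.prod_induction (fun g => IsHanoiWith g {j}) (fun _ _ => IsHanoiWith.mul)
        (isHanoiWith_one _)
        fun s hs => isHanoiWith_singleton_of_mem_inactivePegs (hL s hs) (hj s hs)
    refine ⟨0, fun v _ => ?_⟩
    rcases hprod.secW_eq_self_or_one v with h | h <;> rw [h]
    · exact mem_of_isHanoiWith_singleton hprod
    · exact .inr rfl
  · refine secWEventuallyMem_of_forall_sec fun x => ?_
    obtain ⟨M, hML, hsec, hlen⟩ :=
      exists_sublist_sec_prod_eq (fun s hs => isHanoiAut_of_mem (hL s hs)) x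
    have hshorter : M.length < L.length := hlen.resolve_right fun hall => hcommon ⟨x, hall⟩
    rw [hsec]
    exact secWEventuallyMem_prod M fun s hs => hL s (hML.subset hs)
termination_by L.length

end Contraction

lemma _root_.Subgroup.exists_list_of_mem_closure_of_inv_subset {G : Type*} [Group G] {S : Set G}
    (hS : S⁻¹ ⊆ S) {g : G} (hg : g ∈ Subgroup.closure S) :
    ∃ L : List G, (∀ s ∈ L, s ∈ S) ∧ L.prod = g := by
  rw [← Subgroup.mem_toSubmonoid, Subgroup.closure_toSubmonoid, Set.union_eq_left.mpr hS] at hg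
  exact Submonoid.exists_list_of_mem_closure hg

/-- Corollary: `H_c^{(k)}` is contracting, with nucleus
`S_{k,1} ∪ {1}`. -/
theorem Hc_contracting {k : ℕ} (hk : 3 ≤ k) :
    IsContracting (Subgroup.closure (hanoiSet k 1 ∪ {1})) ∧
    preNucleus (Subgroup.closure (hanoiSet k 1 ∪ {1})) = hanoiSet k 1 ∪ {1} ∧
    IsNucleus (Subgroup.closure (hanoiSet k 1 ∪ {1})) (hanoiSet k 1 ∪ {1}) := by
  set N : Set (Perm (Word k)) := hanoiSet k 1 ∪ {1}
  have hfin : N.Finite := finite_setOf_isHanoiAut.subset fun _ => isHanoiAut_of_mem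
  have hsub : N ⊆ Subgroup.closure N := Subgroup.subset_closure
  have hcontr : ∀ g ∈ Subgroup.closure N, SecWEventuallyMem N g := fun g hg => by
    obtain ⟨L, hL, rfl⟩ :=
      Subgroup.exists_list_of_mem_closure_of_inv_subset
        (fun a ha => inv_inv a ▸ inv_mem_of_mem (Set.mem_inv.mp ha)) hg
    exact secWEventuallyMem_prod L hL
  have hself : ∀ a ∈ N, ∃ j, sec a j = a := fun a => exists_sec_eq_self_of_mem (by omega)
  refine ⟨⟨N, hfin, hsub, hcontr⟩, ?_, ⟨hfin, hsub, hcontr⟩, fun N' _ _ hN' a ha => ?_⟩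
  · ext g
    exact ⟨fun ⟨hg, j, hj⟩ => (hcontr g hg).mem_of_sec_eq_self hj, fun hg => ⟨hsub hg, hself g hg⟩⟩
  · obtain ⟨j, hj⟩ := hself a ha
    exact SecWEventuallyMem.mem_of_sec_eq_self (hN' a (hsub ha)) hj

end Hanoi
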